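/- arXiv:1605.09740 — 4 statements merged into one kernel-verified Lean document; each statement's English description precedes it below -/
import Mathlib

section
/- Every quasi-injective virtually semisimple module is semisimple. -/
/-!
Given a submodule `N ≅ N'` with `N'` a direct summand, quasi-injectivity extends the embedding
`N ≅ N' ⊆ M` to an endomorphism `g` of `M`; following `g` by the projection onto `N'` and by the
inverse isomorphism gives a retraction of `M` onto `N`, whose kernel is a complement of `N`.
-/

/-- A module is virtually semisimple if every submodule is isomorphic to a direct summand. -/
def VirtuallySemisimple (R : Type*) [Ring R] (M : Type*) [AddCommGroup M] [Module R M] : Prop :=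
  ∀ N : Submodule R M, ∃ N' : Submodule R M, (∃ C : Submodule R M, IsCompl N' C) ∧
    Nonempty (N ≃ₗ[R] N')

theorem Submodule.exists_isCompl_of_linearEquiv_of_extension {R M : Type*} [Ring R]
    [AddCommGroup M] [Module R M] {N N' C : Submodule R M} (hN' : IsCompl N' C)
    (φ : N ≃ₗ[R] N') (g : M →ₗ[R] M) (hg : ∀ x : N, g x = φ x) :
    ∃ C' : Submodule R M, IsCompl N C' := by
  refine ⟨_, LinearMap.isCompl_of_proj
    (f := φ.symm.toLinearMap ∘ₗ N'.projectionOnto C hN' ∘ₗ g) fun x => ?_⟩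
  simp [hg, Submodule.projectionOnto_apply_left]

/-- Every quasi-injective virtually semisimple module is semisimple. -/
theorem stmt0 (R : Type*) [Ring R] (M : Type*) [AddCommGroup M] [Module R M]
    (hqi : ∀ (N : Submodule R M) (f : N →ₗ[R] M), ∃ g : M →ₗ[R] M, ∀ x : N, g x = f x)
    (hvs : VirtuallySemisimple R M) : IsSemisimpleModule R M := by
  refine { exists_isCompl := fun N => ?_ }
  obtain ⟨N', ⟨C, hN'⟩, ⟨φ⟩⟩ := hvs N
  obtain ⟨g, hg⟩ := hqi N (N'.subtype ∘ₗ φ.toLinearMap)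
  exact N.exists_isCompl_of_linearEquiv_of_extension hN' φ g hg
end

section
/- If every left R-module is virtually semisimple, then R is a semisimple ring. -/
universe u v

open CategoryTheory

theorem Module.Injective.of_retract {R : Type*} [Ring R] {M Q : Type v}
    [AddCommGroup M] [Module R M] [AddCommGroup Q] [Module R Q] [Module.Injective R Q]
    (s : M →ₗ[R] Q) (r : Q →ₗ[R] M) (hrs : r ∘ₗ s = LinearMap.id) : Module.Injective R M where
  out _ _ _ _ _ _ f hf g := by
    obtain ⟨h, hh⟩ := Module.Injective.out f hf (s ∘ₗ g)
    exact ⟨r ∘ₗ h, fun x ↦ by simp [hh x, ← LinearMap.comp_apply r s, hrs]⟩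

theorem Module.Injective.of_linearEquiv {R : Type*} [Ring R] {M Q : Type v}
    [AddCommGroup M] [Module R M] [AddCommGroup Q] [Module R Q] [Module.Injective R Q]
    (e : M ≃ₗ[R] Q) : Module.Injective R M :=
  .of_retract e.toLinearMap e.symm.toLinearMap (by simp)

theorem Submodule.injective_of_isCompl {R : Type*} [Ring R] {M : Type v}
    [AddCommGroup M] [Module R M] [Module.Injective R M] {N C : Submodule R M} (h : IsCompl N C) :
    Module.Injective R N :=
  .of_retract N.subtype (N.projectionOnto C h) (N.projectionOnto_comp_subtype h)

theorem Submodule.exists_isCompl_of_injective {R : Type*} [Ring R] {M : Type v}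
    [AddCommGroup M] [Module R M] (N : Submodule R M) [Module.Injective R N] :
    ∃ C : Submodule R M, IsCompl N C := by
  obtain ⟨r, hr⟩ := Module.Injective.out N.subtype N.injective_subtype LinearMap.id
  exact ⟨LinearMap.ker r, LinearMap.isCompl_of_proj hr⟩

theorem Module.exists_embedding_into_injective (R : Type u) [Ring R] [Small.{v} R]
    (M : Type v) [AddCommGroup M] [Module R M] :
    ∃ Q : ModuleCat.{v} R, Module.Injective R Q ∧ ∃ f : M →ₗ[R] Q, Function.Injective f := by
  let ι : ModuleCat.of R M ⟶ Injective.under (ModuleCat.of R M) := Injective.ι _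
  exact ⟨Injective.under _,
    Module.injective_module_of_injective_object R _ (inj := Injective.injective_under _),
    ι.hom, (ModuleCat.mono_iff_injective ι).mp inferInstance⟩

theorem VirtuallySemisimple.injective_submodule {R : Type*} [Ring R] {M : Type v}
    [AddCommGroup M] [Module R M] [Module.Injective R M] (hM : VirtuallySemisimple R M)
    (N : Submodule R M) : Module.Injective R N := by
  obtain ⟨N', ⟨C, hC⟩, ⟨e⟩⟩ := hM N
  have := Submodule.injective_of_isCompl hC
  exact .of_linearEquiv e

/-- If every left `R`-module is virtually semisimple, then `R` is a semisimple ring. -/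
theorem stmt1 (R : Type u) [Ring R]
    (h : ∀ (M : Type u) [AddCommGroup M] [Module R M], VirtuallySemisimple R M) :
    IsSemisimpleRing R := by
  obtain ⟨E, _, ι, hι⟩ := Module.exists_embedding_into_injective R R
  refine { exists_isCompl := fun I ↦ ?_ }
  let f : I →ₗ[R] E := ι ∘ₗ I.subtype
  have hf : Function.Injective f := hι.comp I.injective_subtype
  have := (h E).injective_submodule (LinearMap.range f)
  have : Module.Injective R I := .of_linearEquiv (LinearEquiv.ofInjective f hf)
  exact I.exists_isCompl_of_injective
end

section
/- Let R = F[[x,y]]/⟨xy⟩ for a field F, and let 𝔪 = (X, Y) be the maximal ideal generated by the images X, Y of x, y. Then the R-module 𝔪 is not virtually semisimple. -/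
/-!
The element `X + Y` is a non-zero-divisor of `R`, so `R ∙ (X + Y) ≅ R`. If `𝔪` were virtually
semisimple, `R` would be isomorphic to a direct summand `N` of `𝔪`. The image `g` of `1` is then a
non-zero-divisor, and for `c` in a complement of `N` the product `g c` lies in `N` and in the
complement, so the complement vanishes and `𝔪 = R g` is principal. But it is not: if `X = r g` and
`Y = r' g`, comparing the coefficients of `x` and `y` in lifts to `F[[x, y]]` (which see neither
`xy` nor the constant term of `g`) gives `r(0) g_x = 1`, `r'(0) g_x = 0` and `r'(0) g_y = 1`,
which is impossible.
-/

open Finsupp nonZeroDivisors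

section Module

variable {R : Type*} [CommRing R]

noncomputable def LinearEquiv.toSpanSingletonOfSMulEqZero {M : Type*} [AddCommGroup M]
    [Module R M] (v : M) (hv : ∀ r : R, r • v = 0 → r = 0) : R ≃ₗ[R] R ∙ v :=
  (Submodule.quotEquivOfEqBot _ ((Submodule.eq_bot_iff _).mpr fun r hr =>
      hv r ((Ideal.mem_torsionOf_iff v r).mp hr))).symm.trans
    (Ideal.quotTorsionOfEquivSpanSingleton R M v)

theorem Ideal.isPrincipal_of_isCompl_of_linearEquiv {I : Ideal R} {N C : Submodule R I}
    (hNC : IsCompl N C) (e : R ≃ₗ[R] N) : I.IsPrincipal := by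
  set g : R := (((e 1 : N) : I) : R)
  have he (r : R) : (((e r : N) : I) : R) = r * g := by
    conv_lhs => rw [← mul_one r, ← smul_eq_mul, e.map_smul]
    rfl
  have hg : g ∈ R⁰ := mem_nonZeroDivisors_iff_right.mpr fun r hr =>
    e.map_eq_zero_iff.mp (Subtype.ext (Subtype.ext ((he r).trans hr)))
  -- `g • c` lies in both `N` and `C`, and `g` is regular.
  have hC : C = ⊥ := by
    refine (Submodule.eq_bot_iff _).mpr fun c hc => ?_
    have hgc : g • c ∈ N ⊓ C := by
      refine ⟨?_, C.smul_mem g hc⟩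
      rw [show g • c = (c : R) • ((e 1 : N) : I) from Subtype.ext (mul_comm g c)]
      exact N.smul_mem _ (e 1).2
    rw [hNC.inf_eq_bot, Submodule.mem_bot] at hgc
    exact Subtype.ext (mem_nonZeroDivisors_iff_left.mp hg _ (congrArg Subtype.val hgc))
  have hN : N = ⊤ := by simpa [hC] using hNC.sup_eq_top
  refine ⟨g, le_antisymm (fun x hx => ?_) ((Ideal.span_singleton_le_iff_mem _).mpr (e 1).1.2)⟩
  obtain ⟨r, hr⟩ := e.surjective ⟨⟨x, hx⟩, hN ▸ Submodule.mem_top⟩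
  rw [Submodule.mem_span_singleton]
  refine ⟨r, ?_⟩
  rw [smul_eq_mul, ← he, hr]

theorem not_virtuallySemisimple_of_not_isPrincipal {I : Ideal R} {x : R} (hxI : x ∈ I)
    (hx : x ∈ R⁰) (hI : ¬ I.IsPrincipal) : ¬ VirtuallySemisimple R I := fun h => by
  obtain ⟨N, ⟨C, hNC⟩, ⟨e⟩⟩ := h (R ∙ ⟨x, hxI⟩)
  have hv (r : R) (hr : r • (⟨x, hxI⟩ : I) = 0) : r = 0 :=
    mem_nonZeroDivisors_iff_right.mp hx r (congrArg Subtype.val hr)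
  exact hI (Ideal.isPrincipal_of_isCompl_of_linearEquiv hNC
    ((LinearEquiv.toSpanSingletonOfSMulEqZero _ hv).trans e))

end Module

namespace MvPowerSeries

variable {σ R : Type*}

section CommSemiring

variable [CommSemiring R]

theorem monomial_one_dvd_iff {e : σ →₀ ℕ} {f : MvPowerSeries σ R} :
    monomial e (1 : R) ∣ f ↔ ∀ n, ¬ e ≤ n → coeff n f = 0 := by
  refine ⟨fun ⟨k, hk⟩ n hn => by rw [hk, coeff_monomial_mul, if_neg hn], fun h => ?_⟩
  let k : MvPowerSeries σ R := fun d => coeff (d + e) f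
  refine ⟨k, ext fun n => ?_⟩
  rw [coeff_monomial_mul]
  split_ifs with hn
  · show coeff n f = 1 * coeff (n - e + e) f
    rw [one_mul, tsub_add_cancel_of_le hn]
  · exact h n hn

theorem coeff_add_single_X_mul (s : σ) (m : σ →₀ ℕ) (f : MvPowerSeries σ R) :
    coeff (m + single s 1) (X s * f) = coeff m f := by
  rw [X_def, coeff_monomial_mul, if_pos le_add_self, add_tsub_cancel_right, one_mul]

theorem coeff_X_mul_of_eq_zero {s : σ} {m : σ →₀ ℕ} (hm : m s = 0) (f : MvPowerSeries σ R) :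
    coeff m (X s * f) = 0 := by
  rw [X_def, coeff_monomial_mul, if_neg fun h => by simpa [hm] using h s]

variable {s t : σ}

theorem X_mul_X_dvd_iff (hst : s ≠ t) {f : MvPowerSeries σ R} :
    X s * X t ∣ f ↔ ∀ n : σ →₀ ℕ, n s = 0 ∨ n t = 0 → coeff n f = 0 := by
  have hle (n : σ →₀ ℕ) : single s 1 + single t 1 ≤ n ↔ ¬ (n s = 0 ∨ n t = 0) := by
    constructor
    · intro h
      have hs := h s
      have ht := h t
      simp [hst, hst.symm] at hs ht
      omega
    · intro h u
      by_cases hu : u = s <;> by_cases hu' : u = t <;> simp [hu, hu', hst] <;> omega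
  rw [X_def, X_def, monomial_mul_monomial, one_mul, monomial_one_dvd_iff]
  simp only [hle, not_not]

theorem X_mul_X_dvd_of_dvd_add_mul (hst : s ≠ t) {f : MvPowerSeries σ R}
    (h : X s * X t ∣ (X s + X t) * f) : X s * X t ∣ f := by
  rw [X_mul_X_dvd_iff hst] at h ⊢
  intro n hn
  wlog hnt : n t = 0 generalizing s t
  · refine this hst.symm ?_ hn.symm (hn.resolve_right hnt)
    simpa only [mul_comm (X t), add_comm (X t)] using fun n hn => h n hn.symm
  have := h (n + single s 1) (Or.inr (by simp [hnt, hst.symm]))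
  rwa [add_mul, map_add, coeff_add_single_X_mul, coeff_X_mul_of_eq_zero (by simp [hnt, hst.symm]),
    add_zero] at this

theorem coeff_single_one_mul (i : σ) (f g : MvPowerSeries σ R) :
    coeff (single i 1) (f * g) =
      constantCoeff f * coeff (single i 1) g + coeff (single i 1) f * constantCoeff g := by
  classical
  rw [coeff_mul, antidiagonal_single, Finset.sum_map,
    show Finset.HasAntidiagonal.antidiagonal 1 = {(0, 1), (1, 0)} from rfl,
    Finset.sum_insert (by decide), Finset.sum_singleton]
  simp [coeff_zero_eq_constantCoeff]

end CommSemiring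

section CommRing

variable [CommRing R] {s t : σ}

theorem coeff_single_one_eq_of_X_mul_X_dvd_sub (hst : s ≠ t) {f g r : MvPowerSeries σ R}
    (hg : constantCoeff g = 0) (h : X s * X t ∣ f - r * g) (i : σ) :
    coeff (single i 1) f = constantCoeff r * coeff (single i 1) g := by
  have := (X_mul_X_dvd_iff hst).mp h (single i 1) (by
    by_cases his : i = s
    · exact Or.inr (by simp [his, hst])
    · exact Or.inl (by simp [Ne.symm his]))
  rwa [map_sub, coeff_single_one_mul, hg, mul_zero, add_zero, sub_eq_zero] at this

theorem mk_X_add_X_mem_nonZeroDivisors (hst : s ≠ t) :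
    Ideal.Quotient.mk (Ideal.span {X s * X t}) (X s + X t : MvPowerSeries σ R) ∈
      (MvPowerSeries σ R ⧸ Ideal.span {X s * X t})⁰ := by
  refine mem_nonZeroDivisors_iff_right.mpr fun y hy => ?_
  obtain ⟨f, rfl⟩ := Ideal.Quotient.mk_surjective y
  rw [← map_mul, Ideal.Quotient.eq_zero_iff_mem, Ideal.mem_span_singleton, mul_comm f] at hy
  rw [Ideal.Quotient.eq_zero_iff_mem, Ideal.mem_span_singleton]
  exact X_mul_X_dvd_of_dvd_add_mul hst hy

theorem not_isPrincipal_span_mk_X_mk_X [Nontrivial R] (hst : s ≠ t) :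
    ¬ (Ideal.span {Ideal.Quotient.mk (Ideal.span {X s * X t}) (X s : MvPowerSeries σ R),
      Ideal.Quotient.mk (Ideal.span {X s * X t}) (X t)}).IsPrincipal := by
  classical
  set J : Ideal (MvPowerSeries σ R) := Ideal.span {X s * X t}
  rintro ⟨g, hg⟩
  obtain ⟨G, hG, rfl⟩ : ∃ G ∈ Ideal.span {X s, X t}, Ideal.Quotient.mk J G = g := by
    have := hg ▸ Submodule.mem_span_singleton_self g
    rwa [← Set.image_pair, ← Ideal.map_span,
      Ideal.mem_map_iff_of_surjective _ Ideal.Quotient.mk_surjective] at this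
  have hG0 : constantCoeff G = 0 :=
    (Ideal.span_le (I := RingHom.ker constantCoeff)).mpr (by simp [Set.pair_subset_iff]) hG
  have hcoeff (u : σ) (hu : Ideal.Quotient.mk J (X u) ∈
      Ideal.span {Ideal.Quotient.mk J (X s), Ideal.Quotient.mk J (X t)}) :
      ∃ c : R, ∀ i, coeff (single i 1) (X u) = c * coeff (single i 1) G := by
    rw [hg] at hu
    obtain ⟨r, hr⟩ := Ideal.mem_span_singleton'.mp hu
    obtain ⟨r, rfl⟩ := Ideal.Quotient.mk_surjective r
    refine ⟨constantCoeff r, coeff_single_one_eq_of_X_mul_X_dvd_sub hst hG0 ?_⟩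
    rw [← Ideal.mem_span_singleton, ← Ideal.Quotient.eq, map_mul, hr]
  obtain ⟨a, ha⟩ := hcoeff s (Ideal.subset_span (by simp))
  obtain ⟨b, hb⟩ := hcoeff t (Ideal.subset_span (by simp))
  have has := ha s
  have hbs := hb s
  have hbt := hb t
  simp only [coeff_index_single_self_X, coeff_index_single_X, if_neg hst] at has hbs hbt
  set v := coeff (single t 1) G
  exact one_ne_zero (by linear_combination hbt + b * v * has - a * v * hbs : (1 : R) = 0)

end CommRing

end MvPowerSeries

/-- In `R = F[[x,y]]/⟨xy⟩`, the maximal ideal `𝔪 = (X, Y)` is not virtually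
semisimple as an `R`-module. -/
theorem stmt18 (F : Type*) [Field F] :
    let A := MvPowerSeries (Fin 2) F
    let R := A ⧸ Ideal.span ({MvPowerSeries.X 0 * MvPowerSeries.X 1} : Set A)
    let X : R := Ideal.Quotient.mk _ (MvPowerSeries.X 0)
    let Y : R := Ideal.Quotient.mk _ (MvPowerSeries.X 1)
    let 𝔪 : Ideal R := Ideal.span {X, Y}
    ¬ VirtuallySemisimple R 𝔪 := by
  intro A R X Y 𝔪
  have h01 : (0 : Fin 2) ≠ 1 := by decide
  have hXY : X + Y ∈ 𝔪 :=
    Ideal.add_mem _ (Ideal.subset_span (by simp)) (Ideal.subset_span (by simp))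
  refine not_virtuallySemisimple_of_not_isPrincipal hXY ?_
    (MvPowerSeries.not_isPrincipal_span_mk_X_mk_X h01)
  simpa only [map_add] using MvPowerSeries.mk_X_add_X_mem_nonZeroDivisors (R := F) h01
end

section
/- Every finitely generated fully virtually semisimple module is completely virtually semisimple: if M is finitely generated and M/N is virtually semisimple for every submodule N of M, then every submodule of M is virtually semisimple. -/
/-- Virtual semisimplicity transfers along linear equivalences. -/
theorem VirtuallySemisimple.congr {R : Type*} [Ring R] {A B : Type*} [AddCommGroup A]
    [Module R A] [AddCommGroup B] [Module R B] (e : A ≃ₗ[R] B)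
    (hB : VirtuallySemisimple R B) : VirtuallySemisimple R A := by
  intro N
  obtain ⟨N', ⟨C, hC⟩, ⟨f⟩⟩ := hB (N.map (e : A →ₗ[R] B))
  refine ⟨N'.map (e.symm : B →ₗ[R] A), ⟨C.map (e.symm : B →ₗ[R] A), ?_⟩, ⟨?_⟩⟩
  · exact (Submodule.orderIsoMapComap e.symm).isCompl hC
  · exact ((e.submoduleMap N).trans f).trans (e.symm.submoduleMap N')

/-- Every finitely generated fully virtually semisimple module is completely
virtually semisimple. -/
theorem stmt19 (R : Type*) [Ring R] (M : Type*) [AddCommGroup M] [Module R M]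
    [Module.Finite R M]
    (hfull : ∀ N : Submodule R M, VirtuallySemisimple R (M ⧸ N)) :
    ∀ K : Submodule R M, VirtuallySemisimple R K := by
  have hM : VirtuallySemisimple R M :=
    VirtuallySemisimple.congr
      (Submodule.quotEquivOfEqBot (⊥ : Submodule R M) rfl).symm (hfull ⊥)
  intro K
  obtain ⟨D, ⟨C, hDC⟩, ⟨g⟩⟩ := hM K
  exact VirtuallySemisimple.congr
    (g.trans (Submodule.quotientEquivOfIsCompl C D hDC.symm).symm) (hfull C)
end
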